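/- arXiv:1311.3789 — 2 statements merged into one kernel-verified Lean document; each statement's English description precedes it below -/
import Mathlib

section
/- Let G = (V, E) be a compact topological packing graph. Then for every t ∈ ℕ the operator A_t : C(I_t × I_t)_sym → C(I_{2t}) defined by A_tK(S) = Σ_{J,J' ∈ I_t : J ∪ J' = S} K(J, J') is surjective: for every g ∈ C(I_{2t}) there exists H ∈ C(I_t × I_t)_sym with A_tH = g. -/
open MeasureTheory Set Topology
open scoped NNReal ENNReal

noncomputable section

universe u

variable {V : Type u}

/-- A set of vertices is independent if it spans no edge of `G`. -/
def IndepVerts (G : SimpleGraph V) (S : Set V) : Prop :=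
  ∀ ⦃x⦄, x ∈ S → ∀ ⦃y⦄, y ∈ S → ¬ G.Adj x y

/-- A graph on a topological vertex set is a (topological) packing graph if every finite
clique is contained in an open clique. -/
def IsPackingGraph [TopologicalSpace V] (G : SimpleGraph V) : Prop :=
  ∀ S : Set V, S.Finite → G.IsClique S → ∃ U : Set V, IsOpen U ∧ S ⊆ U ∧ G.IsClique U

/-- The independence number: the supremum of cardinalities of (finite) independent sets. -/
def alphaNat (G : SimpleGraph V) : ℕ :=
  sSup {n : ℕ | ∃ S : Set V, IndepVerts G S ∧ S.Finite ∧ S.ncard = n}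

/-- `sub_t(V)`: the subsets of `V` of cardinality at most `t`. -/
def SubAtMost (V : Type u) (t : ℕ) : Type u := {S : Set V // S.Finite ∧ S.ncard ≤ t}

/-- The map realizing `sub_t(V)` as a quotient of `V^t ⊕ {∅}`. -/
def qMap (V : Type u) (t : ℕ) : ((Fin t → V) ⊕ Unit) → SubAtMost V t
  | Sum.inl f => ⟨Set.range f, Set.finite_range f, by
      rw [← Set.image_univ]
      refine le_trans (Set.ncard_image_le Set.finite_univ) ?_
      simp [Set.ncard_univ]⟩
  | Sum.inr _ => ⟨∅, Set.finite_empty, by simp⟩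

/-- `sub_t(V)` carries the quotient topology of `V^t ⊕ {∅}` (product topology on `V^t`,
empty set adjoined via the disjoint union topology). -/
instance [TopologicalSpace V] (t : ℕ) : TopologicalSpace (SubAtMost V t) :=
  TopologicalSpace.coinduced (qMap V t) inferInstance

instance [TopologicalSpace V] (t : ℕ) : MeasurableSpace (SubAtMost V t) := borel _

/-- `I_t`: the independent sets of cardinality at most `t`, as a subspace of `sub_t(V)`. -/
def IndepSpace [TopologicalSpace V] (G : SimpleGraph V) (t : ℕ) : Type u :=
  {S : SubAtMost V t // IndepVerts G S.1}

instance [TopologicalSpace V] (G : SimpleGraph V) (t : ℕ) :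
    TopologicalSpace (IndepSpace G t) := by unfold IndepSpace; infer_instance

instance [TopologicalSpace V] (G : SimpleGraph V) (t : ℕ) :
    MeasurableSpace (IndepSpace G t) := by unfold IndepSpace; infer_instance

/-- The empty set as an element of `I_t`. -/
def emptyIndep [TopologicalSpace V] (G : SimpleGraph V) (t : ℕ) : IndepSpace G t :=
  ⟨⟨(∅ : Set V), Set.finite_empty, by simp⟩, by
    intro x hx; exact absurd hx (Set.notMem_empty x)⟩

/-- A continuous kernel is positive definite if it is symmetric and all its finite
evaluation matrices are positive semidefinite. -/
def IsPosDefKernel {X : Type*} [TopologicalSpace X] (K : C(X × X, ℝ)) : Prop :=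
  (∀ a b : X, K (a, b) = K (b, a)) ∧
    ∀ (m : ℕ) (x : Fin m → X) (c : Fin m → ℝ),
      0 ≤ ∑ i : Fin m, ∑ j : Fin m, c i * c j * K (x i, x j)

/-- The operator `A_t`, on plain functions: `A_t K (S) = ∑_{J ∪ J' = S} K(J, J')`. -/
def AtFun [TopologicalSpace V] (G : SimpleGraph V) (t : ℕ)
    (K : IndepSpace G t × IndepSpace G t → ℝ) (S : IndepSpace G (2 * t)) : ℝ :=
  ∑ᶠ (p : IndepSpace G t × IndepSpace G t) (_ : p.1.1.1 ∪ p.2.1.1 = S.1.1), K p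

/-- The objective value `λ(I_{=1})` of the generalized Lasserre hierarchy. -/
def lasObj [TopologicalSpace V] (G : SimpleGraph V) (t : ℕ)
    (μ : Measure (IndepSpace G (2 * t))) : ℝ :=
  (μ {S : IndepSpace G (2 * t) | S.1.1.ncard = 1}).toReal

/-- Feasibility for the `t`-th step of the generalized Lasserre hierarchy: `λ` is a
positive Radon measure on `I_{2t}` with `λ({∅}) = 1` and `A_t^* λ ⪰ 0`. -/
def lasFeasible [TopologicalSpace V] (G : SimpleGraph V) (t : ℕ)
    (μ : Measure (IndepSpace G (2 * t))) : Prop :=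
  IsFiniteMeasure μ ∧ μ.Regular ∧ μ {emptyIndep G (2 * t)} = 1 ∧
    ∀ K : C(IndepSpace G t × IndepSpace G t, ℝ), IsPosDefKernel K →
      0 ≤ ∫ S, AtFun G t (fun p => K p) S ∂μ

/-- `las_t(G)`, the value of the `t`-th step of the generalized Lasserre hierarchy. -/
def lasValue [TopologicalSpace V] (G : SimpleGraph V) (t : ℕ) : ℝ :=
  sSup {v : ℝ | ∃ μ : Measure (IndepSpace G (2 * t)), lasFeasible G t μ ∧ v = lasObj G t μ}

/-- Feasibility for the dual program `las_t(G)^*`. -/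
def lasDualFeasible [TopologicalSpace V] (G : SimpleGraph V) (t : ℕ)
    (K : C(IndepSpace G t × IndepSpace G t, ℝ)) : Prop :=
  IsPosDefKernel K ∧
    ∀ S : IndepSpace G (2 * t), S ≠ emptyIndep G (2 * t) →
      AtFun G t (fun p => K p) S ≤ if S.1.1.ncard = 1 then -1 else 0

/-- `las_t(G)^*`, the value of the dual of the `t`-th step of the hierarchy. -/
def lasDualValue [TopologicalSpace V] (G : SimpleGraph V) (t : ℕ) : ℝ :=
  sInf {v : ℝ | ∃ K : C(IndepSpace G t × IndepSpace G t, ℝ),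
    lasDualFeasible G t K ∧ v = K (emptyIndep G t, emptyIndep G t)}

/-! For an independent set `S`, the number `N S` of pairs `(J, J')` with `|J|, |J'| ≤ t` and
`J ∪ J' = S` depends only on `|S|`, and `|S|` is locally constant on `I_{2t}`: near `S`, an
independent set meets each of `|S|` disjoint open cliques around the points of `S` exactly once.
Hence `g / N` is continuous on `I_{2t}`, which is closed in the compact Hausdorff space
`sub_{2t}(V)`. Extend it by Tietze to `F` and put `H (J, J') = F (J ∪ J')`; union is continuous
because the square of the proper quotient map `V^t ⊕ {∅} → sub_t(V)` is again a quotient map.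
Then `A_t H S = N S * F S = g S`. -/
theorem continuous_prod_sum_sum_dom {X Y Z W T : Type*} [TopologicalSpace X]
    [TopologicalSpace Y] [TopologicalSpace Z] [TopologicalSpace W] [TopologicalSpace T]
    {f : (X ⊕ Y) × (Z ⊕ W) → T}
    (h₁ : Continuous fun p : X × Z => f (.inl p.1, .inl p.2))
    (h₂ : Continuous fun p : X × W => f (.inl p.1, .inr p.2))
    (h₃ : Continuous fun p : Y × Z => f (.inr p.1, .inl p.2))
    (h₄ : Continuous fun p : Y × W => f (.inr p.1, .inr p.2)) : Continuous f := by
  rw [← Homeomorph.sumProdDistrib.symm.comp_continuous_iff', continuous_sum_dom,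
    ← Homeomorph.prodSumDistrib.symm.comp_continuous_iff', continuous_sum_dom,
    ← Homeomorph.prodSumDistrib.symm.comp_continuous_iff', continuous_sum_dom]
  exact ⟨⟨h₁, h₂⟩, h₃, h₄⟩

theorem Fin.range_append {α : Type*} {m n : ℕ} (u : Fin m → α) (v : Fin n → α) :
    range (Fin.append u v) = range u ∪ range v := by
  ext x
  constructor
  · rintro ⟨i, rfl⟩
    induction i using Fin.addCases <;> simp
  · rintro (⟨i, rfl⟩ | ⟨i, rfl⟩)
    · exact ⟨Fin.castAdd n i, Fin.append_left u v i⟩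
    · exact ⟨Fin.natAdd m i, Fin.append_right u v i⟩

theorem Set.Finite.exists_fin_range_eq {α : Type*} {S : Set α} (hS : S.Finite) (hne : S.Nonempty)
    {k : ℕ} (hSk : S.ncard ≤ k) : ∃ f : Fin k → α, range f = S := by
  obtain ⟨x₀, hx₀⟩ := hne
  set l := hS.toFinset.toList
  have hl : l.length ≤ k := by
    rwa [Finset.length_toList, ← ncard_eq_toFinset_card S hS]
  refine ⟨fun i => l.getD i x₀, subset_antisymm ?_ fun x hx => ?_⟩
  · rintro _ ⟨i, rfl⟩
    dsimp only
    rw [List.getD_eq_getElem?_getD]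
    cases h : l[(i : ℕ)]? with
    | none => exact hx₀
    | some y => simpa [l] using List.mem_of_getElem? h
  · obtain ⟨i, hi, rfl⟩ := List.getElem_of_mem (by simpa [l] using hx : x ∈ l)
    exact ⟨⟨i, hi.trans_le hl⟩, List.getD_eq_getElem _ _ hi⟩

namespace SubAtMost

variable {k : ℕ}

theorem qMap_surjective : Function.Surjective (qMap V k) := by
  rintro ⟨S, hS, hSk⟩
  rcases S.eq_empty_or_nonempty with rfl | hne
  · exact ⟨.inr (), rfl⟩
  · obtain ⟨f, hf⟩ := hS.exists_fin_range_eq hne hSk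
    exact ⟨.inl f, Subtype.ext hf⟩

def union (A B : SubAtMost V k) : SubAtMost V (2 * k) :=
  ⟨A.1 ∪ B.1, A.2.1.union B.2.1, (ncard_union_le _ _).trans (two_mul k ▸ add_le_add A.2.2 B.2.2)⟩

theorem union_comm (A B : SubAtMost V k) : A.union B = B.union A :=
  Subtype.ext (Set.union_comm _ _)

theorem qMap_inl_append (v w : Fin k → V) :
    qMap V (2 * k) (.inl (Fin.append v w ∘ Fin.cast (two_mul k))) =
      (qMap V k (.inl v)).union (qMap V k (.inl w)) :=
  Subtype.ext <| ((finCongr (two_mul k)).surjective.range_comp _).trans (Fin.range_append v w)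

variable [TopologicalSpace V]

theorem continuous_qMap : Continuous (qMap V k) := continuous_coinduced_rng

instance [CompactSpace V] : CompactSpace (SubAtMost V k) :=
  ⟨by simpa [qMap_surjective.range_eq] using isCompact_range (continuous_qMap (V := V) (k := k))⟩

theorem isOpen_of_isOpen_preimage_inl {s : Set (SubAtMost V k)}
    (hs : IsOpen {v : Fin k → V | qMap V k (.inl v) ∈ s}) : IsOpen s :=
  isOpen_coinduced.2 (isOpen_sum_iff.2 ⟨hs, isOpen_discrete _⟩)

theorem isOpen_setOf_subset {U : Set V} (hU : IsOpen U) :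
    IsOpen {A : SubAtMost V k | A.1 ⊆ U} := by
  refine isOpen_of_isOpen_preimage_inl ?_
  have : {v : Fin k → V | range v ⊆ U} = ⋂ i, (· i) ⁻¹' U := by ext; simp [range_subset_iff]
  exact this ▸ isOpen_iInter_of_finite fun i => hU.preimage (continuous_apply i)

theorem isOpen_setOf_inter_nonempty {U : Set V} (hU : IsOpen U) :
    IsOpen {A : SubAtMost V k | (A.1 ∩ U).Nonempty} := by
  refine isOpen_of_isOpen_preimage_inl ?_
  have : {v : Fin k → V | (range v ∩ U).Nonempty} = ⋃ i, (· i) ⁻¹' U := by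
    ext; simp [Set.Nonempty]
  exact this ▸ isOpen_iUnion fun i => hU.preimage (continuous_apply i)

instance [T2Space V] : T2Space (SubAtMost V k) := by
  have key : ∀ A B : SubAtMost V k, ¬ A.1 ⊆ B.1 →
      ∃ u v : Set (SubAtMost V k), IsOpen u ∧ IsOpen v ∧ A ∈ u ∧ B ∈ v ∧ Disjoint u v := by
    intro A B hAB
    obtain ⟨x, hxA, hxB⟩ := not_subset.1 hAB
    obtain ⟨u, v, hu, hv, hxu, hBv, huv⟩ := SeparatedNhds.of_isCompact_isCompact
      isCompact_singleton B.2.1.isCompact (disjoint_singleton_left.2 hxB)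
    refine ⟨_, _, isOpen_setOf_inter_nonempty hu, isOpen_setOf_subset hv,
      ⟨x, hxA, hxu rfl⟩, hBv, disjoint_left.2 ?_⟩
    rintro C ⟨y, hyC, hyu⟩ hCv
    exact disjoint_left.1 huv hyu (hCv hyC)
  refine t2Space_iff _ |>.2 fun A B hne => ?_
  by_cases hAB : A.1 ⊆ B.1
  · obtain ⟨u, v, hu, hv, hBu, hAv, huv⟩ :=
      key B A fun hBA => hne (Subtype.ext (subset_antisymm hAB hBA))
    exact ⟨v, u, hv, hu, hAv, hBu, huv.symm⟩
  · exact key A B hAB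

section Quotient

variable [CompactSpace V] [T2Space V]

theorem isQuotientMap_prodMap_qMap : IsQuotientMap (Prod.map (qMap V k) (qMap V k)) :=
  have hq : IsProperMap (qMap V k) := continuous_qMap.isProperMap
  (hq.prodMap hq).isClosedMap.isQuotientMap (hq.prodMap hq).continuous
    (qMap_surjective.prodMap qMap_surjective)

theorem continuous_union :
    Continuous fun p : SubAtMost V k × SubAtMost V k => p.1.union p.2 := by
  have hcont : Continuous fun p : (Fin k → V) × (Fin k → V) =>
      (qMap V k (.inl p.1)).union (qMap V k (.inl p.2)) := by
    refine (continuous_qMap.comp (continuous_inl.comp ?_)).congr fun p => qMap_inl_append p.1 p.2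
    exact continuous_pi fun i => (continuous_apply _).comp (Fin.continuous_append k k)
  have hempty (A : SubAtMost V k) : A.union (qMap V k (.inr ())) = A.union A :=
    Subtype.ext <| by simp [union, qMap]
  rw [isQuotientMap_prodMap_qMap.continuous_iff]
  refine continuous_prod_sum_sum_dom hcont ?_ ?_ continuous_of_discreteTopology
  · exact (hcont.comp (continuous_fst.prodMk continuous_fst)).congr fun p => (hempty _).symm
  · refine (hcont.comp (continuous_snd.prodMk continuous_snd)).congr fun p => ?_
    exact (hempty _).symm.trans (union_comm _ _)

end Quotient

end SubAtMost

theorem Set.ncard_eq_of_pairwiseDisjoint {ι α : Type*} {S : Set ι} {A : Set α} {W : ι → Set α}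
    (hW : S.PairwiseDisjoint W) (hcover : A ⊆ ⋃ x ∈ S, W x)
    (hmeet : ∀ x ∈ S, (A ∩ W x).Nonempty) (hsub : ∀ x ∈ S, (A ∩ W x).Subsingleton) :
    A.ncard = S.ncard := by
  refine (ncard_congr (fun x hx => (hmeet x hx).some) (fun x hx => (hmeet x hx).some_mem.1)
    (fun x y hx hy hxy => hW.elim hx hy (not_disjoint_iff.2 ⟨_, (hmeet x hx).some_mem.2,
      hxy ▸ (hmeet y hy).some_mem.2⟩)) fun a ha => ?_).symm
  obtain ⟨x, hx, haW⟩ := mem_iUnion₂.1 (hcover ha)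
  exact ⟨x, hx, hsub x hx (hmeet x hx).some_mem ⟨ha, haW⟩⟩

theorem IndepVerts.mono {G : SimpleGraph V} {A B : Set V} (h : IndepVerts G B) (hAB : A ⊆ B) :
    IndepVerts G A :=
  fun _ hx _ hy => h (hAB hx) (hAB hy)

theorem IndepVerts.inter_subsingleton_of_isClique {G : SimpleGraph V} {A U : Set V}
    (hA : IndepVerts G A) (hU : G.IsClique U) : (A ∩ U).Subsingleton :=
  fun _ hx _ hy => by_contra fun hne => hA hx.1 hy.1 (hU hx.2 hy.2 hne)

namespace IsPackingGraph

open SubAtMost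

variable [TopologicalSpace V] {G : SimpleGraph V}

theorem exists_isOpen_isClique (hG : IsPackingGraph G) (x : V) :
    ∃ U, IsOpen U ∧ x ∈ U ∧ G.IsClique U :=
  let ⟨U, hU, hxU, hcl⟩ := hG {x} (finite_singleton x) (G.isClique_singleton x)
  ⟨U, hU, hxU rfl, hcl⟩

variable [T2Space V]

theorem isClosed_setOf_indepVerts (hG : IsPackingGraph G) (k : ℕ) :
    IsClosed {A : SubAtMost V k | IndepVerts G A.1} := by
  refine isOpen_compl_iff.1 (isOpen_iff_forall_mem_open.2 fun A hA => ?_)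
  obtain ⟨x, hx, y, hy, hxy⟩ : ∃ x ∈ A.1, ∃ y ∈ A.1, G.Adj x y := by
    simpa [IndepVerts] using hA
  obtain ⟨U, hU, hxyU, hcl⟩ := hG {x, y} (toFinite _) (G.isClique_pair.2 fun _ => hxy)
  obtain ⟨Ux, Uy, hUx, hUy, hxUx, hyUy, hdisj⟩ := t2_separation hxy.ne
  refine ⟨{C | (C.1 ∩ (U ∩ Ux)).Nonempty} ∩ {C | (C.1 ∩ (U ∩ Uy)).Nonempty}, ?_,
    (isOpen_setOf_inter_nonempty (hU.inter hUx)).inter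
      (isOpen_setOf_inter_nonempty (hU.inter hUy)),
    ⟨x, hx, hxyU (by simp), hxUx⟩, ⟨y, hy, hxyU (by simp), hyUy⟩⟩
  rintro C ⟨⟨a, haC, haU, haUx⟩, ⟨b, hbC, hbU, hbUy⟩⟩ hC
  exact hC haC hbC (hcl haU hbU fun hab => disjoint_left.1 hdisj haUx (hab ▸ hbUy))

theorem eventually_ncard_eq (hG : IsPackingGraph G) {k : ℕ} (S : SubAtMost V k) :
    ∀ᶠ A in 𝓝 S, IndepVerts G A.1 → A.1.ncard = S.1.ncard := by
  choose U hU hxU hcl using hG.exists_isOpen_isClique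
  obtain ⟨W, hW, hWdisj⟩ := S.2.1.t2_separation
  set O : Set (SubAtMost V k) := {A | A.1 ⊆ ⋃ x ∈ S.1, W x ∩ U x} ∩
    ⋂ x ∈ S.1, {A | (A.1 ∩ (W x ∩ U x)).Nonempty}
  have hO : IsOpen O :=
    (isOpen_setOf_subset (isOpen_biUnion fun x _ => (hW x).2.inter (hU x))).inter
      (S.2.1.isOpen_biInter fun x _ => isOpen_setOf_inter_nonempty ((hW x).2.inter (hU x)))
  have hSO : S ∈ O :=
    ⟨fun x hx => mem_biUnion hx ⟨(hW x).1, hxU x⟩,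
      mem_iInter₂.2 fun x hx => ⟨x, hx, (hW x).1, hxU x⟩⟩
  filter_upwards [hO.mem_nhds hSO] with A ⟨hcover, hmeet⟩ hA
  exact ncard_eq_of_pairwiseDisjoint (hWdisj.mono fun x => inter_subset_left) hcover
    (mem_iInter₂.1 hmeet) fun x _ =>
      hA.inter_subsingleton_of_isClique ((hcl x).subset inter_subset_right)

theorem isLocallyConstant_ncard (hG : IsPackingGraph G) (k : ℕ) :
    IsLocallyConstant fun S : IndepSpace G k => S.1.1.ncard :=
  (IsLocallyConstant.iff_eventually_eq _).2 fun S =>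
    ((continuous_subtype_val.tendsto S).eventually (hG.eventually_ncard_eq S.1)).mono
      fun S' h => h S'.2

end IsPackingGraph

section UnionPairs

variable {α : Type*}

def unionPairs (t : ℕ) (S : Set α) : Set (Set α × Set α) :=
  {p | p.1 ∪ p.2 = S ∧ p.1.ncard ≤ t ∧ p.2.ncard ≤ t}

theorem unionPairs_finite (t : ℕ) {S : Set α} (hS : S.Finite) : (unionPairs t S).Finite :=
  (hS.finite_subsets.prod hS.finite_subsets).subset fun _ hp =>
    ⟨hp.1 ▸ subset_union_left, hp.1 ▸ subset_union_right⟩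

theorem unionPairs_nonempty {t : ℕ} {S : Set α} (hS : S.Finite) (hSt : S.ncard ≤ 2 * t) :
    (unionPairs t S).Nonempty := by
  obtain ⟨A, hAS, hA⟩ := exists_subset_card_eq (min_le_right t S.ncard)
  refine ⟨(A, S \ A), union_sdiff_cancel hAS, hA ▸ min_le_left _ _, ?_⟩
  rw [ncard_sdiff hAS (hS.subset hAS), hA]
  omega

theorem ncard_unionPairs_le_of_bijOn {β : Type*} {t : ℕ} {S : Set α} {S' : Set β} {f : α → β}
    (hf : BijOn f S S') (hS' : S'.Finite) : (unionPairs t S).ncard ≤ (unionPairs t S').ncard := by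
  have hinj := hf.injOn
  refine ncard_le_ncard_of_injOn (fun p => (f '' p.1, f '' p.2)) (fun _ ⟨hp, hp₁, hp₂⟩ => ?_)
    (fun p ⟨hp, _⟩ q ⟨hq, _⟩ hpq => ?_) (unionPairs_finite t hS')
  · refine ⟨by rw [← image_union, hp, hf.image_eq], ?_, ?_⟩
    · rwa [(hinj.mono (hp ▸ subset_union_left)).ncard_image]
    · rwa [(hinj.mono (hp ▸ subset_union_right)).ncard_image]
  · obtain ⟨h₁, h₂⟩ := Prod.mk.inj hpq
    exact Prod.ext
      ((hinj.image_eq_image_iff (hp ▸ subset_union_left) (hq ▸ subset_union_left)).1 h₁)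
      ((hinj.image_eq_image_iff (hp ▸ subset_union_right) (hq ▸ subset_union_right)).1 h₂)

theorem ncard_unionPairs_eq_of_ncard_eq (t : ℕ) {S S' : Set α} (hS : S.Finite) (hS' : S'.Finite)
    (h : S.ncard = S'.ncard) : (unionPairs t S).ncard = (unionPairs t S').ncard := by
  cases isEmpty_or_nonempty α
  · rw [Subsingleton.elim S S']
  have he : S.encard = S'.encard := by rw [← hS.cast_ncard_eq, ← hS'.cast_ncard_eq, h]
  obtain ⟨f, hf⟩ := hS.exists_bijOn_of_encard_eq he
  obtain ⟨g, hg⟩ := hS'.exists_bijOn_of_encard_eq he.symm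
  exact (ncard_unionPairs_le_of_bijOn hf hS').antisymm (ncard_unionPairs_le_of_bijOn hg hS)

end UnionPairs

section PairCount

variable [TopologicalSpace V] {G : SimpleGraph V} {t m : ℕ}

def IndepSpace.ofSubset (S : IndepSpace G m) {A : Set V} (hA : A ⊆ S.1.1) (hAt : A.ncard ≤ t) :
    IndepSpace G t :=
  ⟨⟨A, S.1.2.1.subset hA, hAt⟩, S.2.mono hA⟩

theorem image_setOf_union_eq_unionPairs (S : IndepSpace G m) :
    (fun p : IndepSpace G t × IndepSpace G t => (p.1.1.1, p.2.1.1)) ''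
      {p | p.1.1.1 ∪ p.2.1.1 = S.1.1} = unionPairs t S.1.1 := by
  refine subset_antisymm ?_ fun q ⟨hq, hq₁, hq₂⟩ => ?_
  · rintro _ ⟨p, hp, rfl⟩
    exact ⟨hp, p.1.1.2.2, p.2.1.2.2⟩
  · exact ⟨(S.ofSubset (hq ▸ subset_union_left) hq₁, S.ofSubset (hq ▸ subset_union_right) hq₂),
      hq, rfl⟩

theorem injective_prodMap_val_val :
    Function.Injective fun p : IndepSpace G t × IndepSpace G t => (p.1.1.1, p.2.1.1) :=
  fun _ _ h => Prod.ext (Subtype.ext (Subtype.ext (Prod.mk.inj h).1))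
    (Subtype.ext (Subtype.ext (Prod.mk.inj h).2))

theorem AtFun_eq_ncard_mul (K : IndepSpace G t × IndepSpace G t → ℝ) (S : IndepSpace G (2 * t))
    {c : ℝ} (hK : ∀ p : IndepSpace G t × IndepSpace G t, p.1.1.1 ∪ p.2.1.1 = S.1.1 → K p = c) :
    AtFun G t K S = (unionPairs t S.1.1).ncard * c := by
  set P := {p : IndepSpace G t × IndepSpace G t | p.1.1.1 ∪ p.2.1.1 = S.1.1}
  have himage : _ '' P = unionPairs t S.1.1 := image_setOf_union_eq_unionPairs S
  have hfin : P.Finite :=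
    (himage ▸ unionPairs_finite t S.1.2.1).of_finite_image injective_prodMap_val_val.injOn
  change ∑ᶠ p ∈ P, K p = _
  rw [finsum_mem_congr (t := P) rfl hK, finsum_mem_eq_finite_toFinset_sum _ hfin,
    Finset.sum_const, ← ncard_eq_toFinset_card _ hfin, nsmul_eq_mul, ← himage,
    ncard_image_of_injective _ injective_prodMap_val_val]

theorem IsPackingGraph.isLocallyConstant_ncard_unionPairs [T2Space V] (hG : IsPackingGraph G)
    (t m : ℕ) : IsLocallyConstant fun S : IndepSpace G m => (unionPairs t S.1.1).ncard :=
  (IsLocallyConstant.iff_eventually_eq _).2 fun S =>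
    ((IsLocallyConstant.iff_eventually_eq _).1 (hG.isLocallyConstant_ncard m) S).mono
      fun S' h => ncard_unionPairs_eq_of_ncard_eq t S'.1.2.1 S.1.2.1 h

end PairCount

/-- For a compact topological packing graph `G`, the operator
`A_t : C(I_t × I_t)_sym → C(I_{2t})` is surjective: every continuous `g : I_{2t} → ℝ` is of
the form `A_t H` for some continuous symmetric kernel `H`. -/
theorem At_surjective
    {V : Type u} [TopologicalSpace V] [CompactSpace V] [T2Space V]
    (G : SimpleGraph V) (hG : IsPackingGraph G) (t : ℕ)
    (g : C(IndepSpace G (2 * t), ℝ)) :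
    ∃ H : C(IndepSpace G t × IndepSpace G t, ℝ),
      (∀ a b : IndepSpace G t, H (a, b) = H (b, a)) ∧
      ∀ S : IndepSpace G (2 * t), AtFun G t (fun p => H p) S = g S := by
  set N : IndepSpace G (2 * t) → ℝ := fun S => (unionPairs t S.1.1).ncard
  have hN (S : IndepSpace G (2 * t)) : N S ≠ 0 := Nat.cast_ne_zero.2
    ((unionPairs_nonempty S.1.2.1 S.1.2.2).ncard_pos (unionPairs_finite t S.1.2.1)).ne'
  have hNc : Continuous N := ((hG.isLocallyConstant_ncard_unionPairs t _).comp Nat.cast).continuous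
  obtain ⟨F, hF⟩ := ContinuousMap.exists_extension'
    (hG.isClosed_setOf_indepVerts (2 * t)).isClosedEmbedding_subtypeVal
    ⟨fun S => g S / N S, (map_continuous g).div hNc hN⟩
  refine ⟨⟨fun p => F (p.1.1.union p.2.1), (map_continuous F).comp
    (SubAtMost.continuous_union.comp (continuous_subtype_val.prodMap continuous_subtype_val))⟩,
    fun a b => congrArg F (SubAtMost.union_comm _ _), fun S => ?_⟩
  refine (AtFun_eq_ncard_mul _ S fun p hp => congrArg F (Subtype.ext hp)).trans ?_
  rw [show F S.1 = g S / N S from congrFun hF S]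
  exact mul_div_cancel₀ _ (hN S)

end
end

section
/- Let G = (V, E) be a compact topological packing graph, e ∈ V, and G^e the induced subgraph on V^e = {x ∈ V : x ≠ e and {e, x} ∉ E}. Then the three-point bound 1 + inf{F(e,e) : F ∈ C((V^e ∪ {e}) × (V^e ∪ {e}))_{⪰0}, F(x,x) + F(e,x) + F(x,e) ≤ −1 for all x with {e,x} ∈ I_{=2}, F(x,y) ≤ 0 for all x, y with {e,x,y} ∈ I_{=3}} equals 1 + las_1(G^e)*; the natural identification K(∅,∅) = F(e,e), K(∅,{x}) = K({x},∅) = F(e,x), K({x},{y}) = F(x,y) is a bijection between the two feasible regions preserving objective values. -/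
open MeasureTheory Set Topology
open scoped NNReal ENNReal

noncomputable section

universe u

variable {V : Type u}

/-- The vertex set `V^e = {x ∈ V : x ≠ e, {e,x} ∉ E}` of the subgraph `G^e`. -/
def Vsub (G : SimpleGraph V) (e : V) : Set V := {x : V | x ≠ e ∧ ¬ G.Adj e x}

/-- The induced subgraph `G^e` of `G` on `V^e`. -/
def Gsub [TopologicalSpace V] (G : SimpleGraph V) (e : V) : SimpleGraph (Vsub G e) :=
  SimpleGraph.comap Subtype.val G

/-- The inclusion `I_t(G^e) → I_t(G)` of independent sets of the subgraph into those of `G`. -/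
def liftIndep [TopologicalSpace V] (G : SimpleGraph V) (e : V) (t : ℕ) :
    IndepSpace (Gsub G e) t → IndepSpace G t := fun S =>
  ⟨⟨Subtype.val '' S.1.1, S.1.2.1.image _, by
      rw [Set.ncard_image_of_injective _ Subtype.val_injective]; exact S.1.2.2⟩, by
    rintro x ⟨x', hx', rfl⟩ y ⟨y', hy', rfl⟩ hadj
    exact S.2 hx' hy' hadj⟩

/-- The singleton `{e}` as an element of `I_t(G)`, for `t ≥ 1`. -/
def singletonIndep [TopologicalSpace V] (G : SimpleGraph V) (t : ℕ) (e : V)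
    (ht : 1 ≤ t) : IndepSpace G t :=
  ⟨⟨({e} : Set V), Set.finite_singleton e, by simpa using ht⟩, by
    intro x hx y hy hadj
    rw [Set.mem_singleton_iff] at hx hy
    subst hx; subst hy
    exact G.irrefl hadj⟩
section ThreePoint

variable [TopologicalSpace V] (G : SimpleGraph V) (e : V)

/-- The vertex `e` as an element of `V^e ∪ {e}`. -/
def basePt : ↥(insert e (Vsub G e)) := ⟨e, Set.mem_insert e _⟩

/-- A vertex of `V^e` as an element of `V^e ∪ {e}`. -/
def inVe (x : Vsub G e) : ↥(insert e (Vsub G e)) := ⟨x.1, Set.mem_insert_of_mem e x.2⟩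

/-- Feasibility for the three-point bound: `F ∈ C((V^e ∪ {e}) × (V^e ∪ {e}))_{⪰0}`,
`F(x,x) + F(e,x) + F(x,e) ≤ −1` whenever `{e,x} ∈ I_{=2}`, and `F(x,y) ≤ 0` whenever
`{e,x,y} ∈ I_{=3}`. -/
def threePointFeasible (F : C(↥(insert e (Vsub G e)) × ↥(insert e (Vsub G e)), ℝ)) : Prop :=
  IsPosDefKernel F ∧
    (∀ x : Vsub G e,
      F (inVe G e x, inVe G e x) + F (basePt G e, inVe G e x) + F (inVe G e x, basePt G e)
        ≤ -1) ∧
    ∀ x y : Vsub G e, (x : V) ≠ (y : V) → ¬ G.Adj x y → F (inVe G e x, inVe G e y) ≤ 0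

/-- The value of the three-point bound (without the added constant `1`). -/
def threePointValue : ℝ :=
  sInf {v : ℝ | ∃ F : C(↥(insert e (Vsub G e)) × ↥(insert e (Vsub G e)), ℝ),
    threePointFeasible G e F ∧ v = F (basePt G e, basePt G e)}

/-- The natural identification between kernels for the three-point bound and kernels for
`las_1(G^e)^*`: `K(∅,∅) = F(e,e)`, `K(∅,{x}) = K({x},∅) = F(e,x)`, `K({x},{y}) = F(x,y)`. -/
def threePointCorresponds (F : C(↥(insert e (Vsub G e)) × ↥(insert e (Vsub G e)), ℝ))
    (K : C(IndepSpace (Gsub G e) 1 × IndepSpace (Gsub G e) 1, ℝ)) : Prop :=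
  K (emptyIndep (Gsub G e) 1, emptyIndep (Gsub G e) 1) = F (basePt G e, basePt G e) ∧
  (∀ x : Vsub G e,
    K (emptyIndep (Gsub G e) 1, singletonIndep (Gsub G e) 1 x le_rfl) =
        F (basePt G e, inVe G e x) ∧
      K (singletonIndep (Gsub G e) 1 x le_rfl, emptyIndep (Gsub G e) 1) =
        F (inVe G e x, basePt G e)) ∧
  ∀ x y : Vsub G e,
    K (singletonIndep (Gsub G e) 1 x le_rfl, singletonIndep (Gsub G e) 1 y le_rfl) =
      F (inVe G e x, inVe G e y)

end ThreePoint

/-!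
Send `e ↦ ∅` and `x ↦ {x}`. This identifies `V^e ∪ {e}` with `I_1(G^e)` as topological spaces:
the inverse is continuous by the quotient description of `I_1`, and the map itself is continuous
because `e` is isolated in `V^e ∪ {e}` (its closed neighbourhood is open, `G` being a packing
graph) while the points of `V^e` have neighbourhoods avoiding `e`. Pulling kernels back along this
homeomorphism matches the two programs constraint by constraint: a nonempty `S ∈ I_2(G^e)` is
either `{x}`, where `A_1 K(S) = K({x},{x}) + K(∅,{x}) + K({x},∅)`, or an independent pair
`{x, y}`, where `A_1 K(S) = K({x},{y}) + K({y},{x}) = 2 K({x},{y})` by symmetry.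
-/

namespace IndepSpace

variable [TopologicalSpace V] {G : SimpleGraph V}

lemma ext_iff_val {t : ℕ} {S T : IndepSpace G t} : S = T ↔ S.1.1 = T.1.1 :=
  ⟨congrArg (fun S : IndepSpace G t => S.1.1), fun h => Subtype.ext (Subtype.ext h)⟩

@[simp] lemma emptyIndep_val {t : ℕ} : (emptyIndep G t).1.1 = ∅ := rfl

@[simp] lemma singletonIndep_val {t : ℕ} (x : V) (ht : 1 ≤ t) :
    (singletonIndep G t x ht).1.1 = {x} := rfl

lemma emptyIndep_ne_singletonIndep (x : V) : emptyIndep G 1 ≠ singletonIndep G 1 x le_rfl := by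
  simp [ext_iff_val]

lemma singletonIndep_injective :
    Function.Injective (fun x : V => singletonIndep G 1 x le_rfl) := fun x y h => by
  simpa [ext_iff_val] using h

lemma eq_emptyIndep_or_singletonIndep (S : IndepSpace G 1) :
    S = emptyIndep G 1 ∨ ∃ x, S = singletonIndep G 1 x le_rfl := by
  simp only [ext_iff_val]
  exact (Set.ncard_le_one_iff_eq S.1.2.1).1 S.1.2.2

lemma exists_eq_singleton_or_pair {S : IndepSpace G (2 * 1)} (hS : S ≠ emptyIndep G (2 * 1)) :
    (∃ x, S.1.1 = {x}) ∨ ∃ x y, x ≠ y ∧ S.1.1 = {x, y} := by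
  rw [← Set.ncard_eq_one, ← Set.ncard_eq_two]
  have hpos : 0 < S.1.1.ncard :=
    (Set.ncard_pos S.1.2.1).2 (Set.nonempty_iff_ne_empty.2 fun h => hS (ext_iff_val.2 h))
  have hle : S.1.1.ncard ≤ 2 := S.1.2.2
  omega

lemma union_eq_singleton_iff (p : IndepSpace G 1 × IndepSpace G 1) (x : V) :
    p.1.1.1 ∪ p.2.1.1 = {x} ↔
      p ∈ ({(singletonIndep G 1 x le_rfl, singletonIndep G 1 x le_rfl),
        (emptyIndep G 1, singletonIndep G 1 x le_rfl),
        (singletonIndep G 1 x le_rfl, emptyIndep G 1)} : Set _) := by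
  obtain ⟨S, T⟩ := p
  rcases eq_emptyIndep_or_singletonIndep S with rfl | ⟨a, rfl⟩ <;>
    rcases eq_emptyIndep_or_singletonIndep T with rfl | ⟨b, rfl⟩ <;>
    simp [Prod.ext_iff, ext_iff_val, Set.eq_singleton_iff_unique_mem]
  grind

lemma union_eq_pair_iff (p : IndepSpace G 1 × IndepSpace G 1) {x y : V} (hxy : x ≠ y) :
    p.1.1.1 ∪ p.2.1.1 = {x, y} ↔
      p ∈ ({(singletonIndep G 1 x le_rfl, singletonIndep G 1 y le_rfl),
        (singletonIndep G 1 y le_rfl, singletonIndep G 1 x le_rfl)} : Set _) := by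
  have empty_ne : (∅ : Set V) ≠ {x, y} := (Set.insert_nonempty x {y}).ne_empty.symm
  have singleton_ne (a : V) : ({a} : Set V) ≠ {x, y} := fun h => by
    have := (Set.eq_singleton_iff_unique_mem.1 h.symm).2
    simp only [Set.mem_insert_iff, Set.mem_singleton_iff, forall_eq_or_imp, forall_eq] at this
    exact hxy (this.1.trans this.2.symm)
  obtain ⟨S, T⟩ := p
  rcases eq_emptyIndep_or_singletonIndep S with rfl | ⟨a, rfl⟩ <;>
    rcases eq_emptyIndep_or_singletonIndep T with rfl | ⟨b, rfl⟩ <;>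
    simp [Prod.ext_iff, ext_iff_val, Set.pair_eq_pair_iff, empty_ne, singleton_ne]
  tauto

end IndepSpace

open IndepSpace

section LasserreOne

variable [TopologicalSpace V] {G : SimpleGraph V}

def pairIndep (G : SimpleGraph V) (t : ℕ) (x y : V) (hxy : ¬ G.Adj x y) (ht : 2 ≤ t) :
    IndepSpace G t :=
  ⟨⟨{x, y}, Set.toFinite _, (Set.ncard_insert_le x {y}).trans (by simpa using ht)⟩, by
    rintro a (rfl | rfl) b (rfl | rfl) h
    exacts [G.irrefl h, hxy h, hxy h.symm, G.irrefl h]⟩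

@[simp] lemma pairIndep_val (t : ℕ) (x y : V) (hxy : ¬ G.Adj x y) (ht : 2 ≤ t) :
    (pairIndep G t x y hxy ht).1.1 = {x, y} := rfl

lemma atFun_one_of_eq_singleton (K : IndepSpace G 1 × IndepSpace G 1 → ℝ)
    {S : IndepSpace G (2 * 1)} {x : V} (hS : S.1.1 = {x}) :
    AtFun G 1 K S = K (singletonIndep G 1 x le_rfl, singletonIndep G 1 x le_rfl) +
      K (emptyIndep G 1, singletonIndep G 1 x le_rfl) +
      K (singletonIndep G 1 x le_rfl, emptyIndep G 1) := by
  have hne := emptyIndep_ne_singletonIndep (G := G) x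
  simp_rw [AtFun, hS, union_eq_singleton_iff]
  rw [finsum_mem_insert _ (by simp [hne.symm]) (Set.toFinite _), finsum_mem_pair (by simp [hne]),
    add_assoc]

lemma atFun_one_of_eq_pair (K : IndepSpace G 1 × IndepSpace G 1 → ℝ)
    {S : IndepSpace G (2 * 1)} {x y : V} (hxy : x ≠ y) (hS : S.1.1 = {x, y}) :
    AtFun G 1 K S = K (singletonIndep G 1 x le_rfl, singletonIndep G 1 y le_rfl) +
      K (singletonIndep G 1 y le_rfl, singletonIndep G 1 x le_rfl) := by
  simp_rw [AtFun, hS, union_eq_pair_iff _ hxy]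
  exact finsum_mem_pair (by simp [singletonIndep_injective.eq_iff, hxy])

lemma lasDualFeasible_one_iff (K : C(IndepSpace G 1 × IndepSpace G 1, ℝ)) :
    lasDualFeasible G 1 K ↔ IsPosDefKernel K ∧
      (∀ x, K (singletonIndep G 1 x le_rfl, singletonIndep G 1 x le_rfl) +
        K (emptyIndep G 1, singletonIndep G 1 x le_rfl) +
        K (singletonIndep G 1 x le_rfl, emptyIndep G 1) ≤ -1) ∧
      ∀ x y, x ≠ y → ¬ G.Adj x y →
        K (singletonIndep G 1 x le_rfl, singletonIndep G 1 y le_rfl) ≤ 0 := by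
  constructor
  · rintro ⟨hK, hle⟩
    refine ⟨hK, fun x => ?_, fun x y hxy hadj => ?_⟩
    · have := hle (singletonIndep G (2 * 1) x (by norm_num)) (by simp [ext_iff_val])
      rwa [atFun_one_of_eq_singleton _ rfl, if_pos (by simp)] at this
    · have := hle (pairIndep G (2 * 1) x y hadj le_rfl)
        (by simp [ext_iff_val, (Set.insert_nonempty x {y}).ne_empty])
      rw [atFun_one_of_eq_pair _ hxy rfl, if_neg (by simp [Set.ncard_pair hxy]),
        hK.1 (singletonIndep G 1 y le_rfl)] at this
      linarith
  · rintro ⟨hK, hsingle, hpair⟩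
    refine ⟨hK, fun S hS => ?_⟩
    obtain ⟨x, hx⟩ | ⟨x, y, hxy, hS⟩ := exists_eq_singleton_or_pair hS
    · rw [atFun_one_of_eq_singleton _ hx, if_pos (by simp [hx])]
      exact hsingle x
    · have hadj : ¬ G.Adj x y := S.2 (by simp [hS]) (by simp [hS])
      rw [atFun_one_of_eq_pair _ hxy hS, if_neg (by simp [hS, Set.ncard_pair hxy])]
      linarith [hpair x y hxy hadj, hpair y x hxy.symm (fun h => hadj h.symm)]

end LasserreOne

namespace SubAtMost

variable {Y : Type*}

open Classical in
def elimOne (y₀ : Y) (g : V → Y) (S : SubAtMost V 1) : Y :=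
  if h : S.1.Nonempty then g h.some else y₀

lemma elimOne_of_eq_empty (y₀ : Y) (g : V → Y) {S : SubAtMost V 1} (hS : S.1 = ∅) :
    elimOne y₀ g S = y₀ := by
  simp [elimOne, hS]

lemma elimOne_of_eq_singleton (y₀ : Y) (g : V → Y) {S : SubAtMost V 1} {x : V}
    (hS : S.1 = {x}) : elimOne y₀ g S = g x := by
  have hne : S.1.Nonempty := hS ▸ Set.singleton_nonempty x
  rw [elimOne, dif_pos hne]
  exact congrArg g (Set.eq_of_mem_singleton (hS.subset hne.some_mem))

lemma continuous_elimOne [TopologicalSpace V] [TopologicalSpace Y] (y₀ : Y) {g : V → Y}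
    (hg : Continuous g) : Continuous (elimOne y₀ g) := by
  refine continuous_coinduced_dom.2 (continuous_sum_dom.2 ⟨?_, continuous_of_discreteTopology⟩)
  have : (elimOne y₀ g ∘ qMap V 1) ∘ Sum.inl = fun f => g (f 0) :=
    funext fun f => elimOne_of_eq_singleton y₀ g Set.range_unique
  rw [this]
  exact hg.comp (continuous_apply 0)

end SubAtMost

lemma continuous_singletonIndep_one [TopologicalSpace V] (G : SimpleGraph V) :
    Continuous (fun x : V => singletonIndep G 1 x le_rfl) := by
  have hq : Continuous fun x : V => qMap V 1 (Sum.inl fun _ => x) :=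
    (continuous_coinduced_rng (f := qMap V 1)).comp
      (continuous_inl.comp (continuous_pi fun _ => continuous_id))
  exact continuous_induced_rng.2 (hq.congr fun _ => Subtype.ext Set.range_const)

section KernelCongr

variable {X Y : Type*} [TopologicalSpace X] [TopologicalSpace Y]

def Homeomorph.kernelCongr (f : Y ≃ₜ X) : C(X × X, ℝ) ≃ C(Y × Y, ℝ) where
  toFun K := K.comp (f.prodCongr f)
  invFun F := F.comp (f.symm.prodCongr f.symm)
  left_inv K := by ext ⟨a, b⟩; simp
  right_inv F := by ext ⟨a, b⟩; simp

@[simp] lemma Homeomorph.kernelCongr_apply (f : Y ≃ₜ X) (K : C(X × X, ℝ)) (a b : Y) :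
    f.kernelCongr K (a, b) = K (f a, f b) := rfl

lemma IsPosDefKernel.kernelCongr {K : C(X × X, ℝ)} (hK : IsPosDefKernel K) (f : Y ≃ₜ X) :
    IsPosDefKernel (f.kernelCongr K) :=
  ⟨fun a b => hK.1 (f a) (f b), fun m x c => hK.2 m (f ∘ x) c⟩

lemma Homeomorph.isPosDefKernel_kernelCongr_iff (f : Y ≃ₜ X) {K : C(X × X, ℝ)} :
    IsPosDefKernel (f.kernelCongr K) ↔ IsPosDefKernel K := by
  refine ⟨fun h => ?_, fun h => h.kernelCongr f⟩
  have hK : f.symm.kernelCongr (f.kernelCongr K) = K := by ext ⟨a, b⟩; simp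
  exact hK ▸ h.kernelCongr f.symm

end KernelCongr

lemma IsPackingGraph.isOpen_insert_neighborSet [TopologicalSpace V] {G : SimpleGraph V}
    (hG : IsPackingGraph G) (e : V) : IsOpen (insert e (G.neighborSet e)) := by
  refine isOpen_iff_forall_mem_open.2 fun x hx => ?_
  obtain ⟨U, hU, hexU, hUclique⟩ := hG {e, x} (Set.toFinite _)
    (SimpleGraph.isClique_pair.2 fun hne => hx.resolve_left hne.symm)
  refine ⟨U, fun y hy => ?_, hU, hexU (by simp)⟩
  by_cases hye : y = e
  · exact .inl hye
  · exact .inr (hUclique (hexU (by simp)) hy (Ne.symm hye))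

lemma eq_basePt_or_inVe (G : SimpleGraph V) (e : V) (x : ↥(insert e (Vsub G e))) :
    x = basePt G e ∨ ∃ y, x = inVe G e y := by
  obtain ⟨x, rfl | hx⟩ := x
  exacts [.inl rfl, .inr ⟨⟨x, hx⟩, rfl⟩]

lemma isOpen_singleton_basePt [TopologicalSpace V] {G : SimpleGraph V} (hG : IsPackingGraph G)
    (e : V) : IsOpen {basePt G e} := by
  have : Subtype.val ⁻¹' insert e (G.neighborSet e) = {basePt G e} := by
    ext ⟨x, hx⟩
    simp only [Set.mem_preimage, Set.mem_insert_iff, SimpleGraph.mem_neighborSet,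
      Set.mem_singleton_iff, basePt, Subtype.mk.injEq]
    rcases hx with rfl | ⟨-, hx⟩ <;> tauto
  exact this ▸ (hG.isOpen_insert_neighborSet e).preimage continuous_subtype_val

section ToIndepOne

variable [TopologicalSpace V] (G : SimpleGraph V) (e : V)

lemma continuous_inVe : Continuous (inVe G e) :=
  continuous_subtype_val.subtype_mk _

/-- `x ↦ V^e ∩ {x}`, which is `∅` for `x = e` and `{x}` otherwise. -/
def toIndepOne (x : ↥(insert e (Vsub G e))) : IndepSpace (Gsub G e) 1 :=
  ⟨⟨Subtype.val ⁻¹' {x.1}, (Set.finite_singleton _).preimage Subtype.val_injective.injOn,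
    (Set.ncard_le_one (Set.finite_singleton _ |>.preimage Subtype.val_injective.injOn)).2
      fun _ ha _ hb => Subtype.ext (ha.trans hb.symm)⟩,
    fun a ha b hb => (Subtype.ext (ha.trans hb.symm) : a = b) ▸ (Gsub G e).irrefl⟩

lemma toIndepOne_basePt : toIndepOne G e (basePt G e) = emptyIndep (Gsub G e) 1 :=
  ext_iff_val.2 (Set.eq_empty_of_forall_notMem fun x hx => x.2.1 hx)

lemma toIndepOne_inVe (x : Vsub G e) :
    toIndepOne G e (inVe G e x) = singletonIndep (Gsub G e) 1 x le_rfl :=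
  ext_iff_val.2 (Set.ext fun _ => Subtype.ext_iff.symm)

end ToIndepOne

section HomeomorphIndepOne

variable [TopologicalSpace V] [T1Space V] {G : SimpleGraph V}

lemma continuous_toIndepOne (hG : IsPackingGraph G) (e : V) : Continuous (toIndepOne G e) := by
  refine continuous_iff_continuousAt.2 fun x => ?_
  rcases eq_basePt_or_inVe G e x with rfl | ⟨y, rfl⟩
  · refine (continuousAt_const (y := emptyIndep (Gsub G e) 1)).congr
      (Filter.eventuallyEq_of_mem ((isOpen_singleton_basePt hG e).mem_nhds rfl) fun z hz => ?_)
    rw [Set.mem_singleton_iff.1 hz, toIndepOne_basePt]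
  · let O : Set ↥(insert e (Vsub G e)) := {z | z.1 ≠ e}
    have hO : IsOpen O := isOpen_ne.preimage continuous_subtype_val
    have hcont : ContinuousOn (toIndepOne G e) O := by
      rw [continuousOn_iff_continuous_domRestrict]
      have : O.domRestrict (toIndepOne G e) = (fun x => singletonIndep (Gsub G e) 1 x le_rfl) ∘
          fun z : O => ⟨z.1.1, z.1.2.resolve_left z.2⟩ :=
        funext fun z => toIndepOne_inVe G e ⟨z.1.1, z.1.2.resolve_left z.2⟩
      rw [this]
      exact (continuous_singletonIndep_one _).comp
        ((continuous_subtype_val.comp continuous_subtype_val).subtype_mk _)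
    exact hcont.continuousAt (hO.mem_nhds y.2.1)

variable (hG : IsPackingGraph G) (e : V)

def homeomorphIndepOne : ↥(insert e (Vsub G e)) ≃ₜ IndepSpace (Gsub G e) 1 where
  toFun := toIndepOne G e
  invFun S := SubAtMost.elimOne (basePt G e) (inVe G e) S.1
  left_inv x := by
    rcases eq_basePt_or_inVe G e x with rfl | ⟨y, rfl⟩
    · rw [toIndepOne_basePt]; exact SubAtMost.elimOne_of_eq_empty _ _ rfl
    · rw [toIndepOne_inVe]; exact SubAtMost.elimOne_of_eq_singleton _ _ rfl
  right_inv S := by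
    rcases eq_emptyIndep_or_singletonIndep S with rfl | ⟨x, rfl⟩
    · exact (congrArg (toIndepOne G e) (SubAtMost.elimOne_of_eq_empty _ _ rfl)).trans
        (toIndepOne_basePt G e)
    · exact (congrArg (toIndepOne G e) (SubAtMost.elimOne_of_eq_singleton _ _ rfl)).trans
        (toIndepOne_inVe G e x)
  continuous_toFun := continuous_toIndepOne hG e
  continuous_invFun :=
    (SubAtMost.continuous_elimOne _ (continuous_inVe G e)).comp continuous_subtype_val

@[simp] lemma homeomorphIndepOne_basePt :
    homeomorphIndepOne hG e (basePt G e) = emptyIndep (Gsub G e) 1 :=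
  toIndepOne_basePt G e

@[simp] lemma homeomorphIndepOne_inVe (x : Vsub G e) :
    homeomorphIndepOne hG e (inVe G e x) = singletonIndep (Gsub G e) 1 x le_rfl :=
  toIndepOne_inVe G e x

end HomeomorphIndepOne

section ThreePointCorrespondence

variable [TopologicalSpace V] [T1Space V] {G : SimpleGraph V}

lemma threePointFeasible_kernelCongr_iff (hG : IsPackingGraph G) (e : V)
    (K : C(IndepSpace (Gsub G e) 1 × IndepSpace (Gsub G e) 1, ℝ)) :
    threePointFeasible G e ((homeomorphIndepOne hG e).kernelCongr K) ↔
      lasDualFeasible (Gsub G e) 1 K := by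
  rw [threePointFeasible, lasDualFeasible_one_iff, Homeomorph.isPosDefKernel_kernelCongr_iff]
  simp only [Homeomorph.kernelCongr_apply, homeomorphIndepOne_basePt, homeomorphIndepOne_inVe,
    Subtype.coe_ne_coe]
  rfl

lemma threePointCorresponds_iff (hG : IsPackingGraph G) (e : V)
    (F : C(↥(insert e (Vsub G e)) × ↥(insert e (Vsub G e)), ℝ))
    (K : C(IndepSpace (Gsub G e) 1 × IndepSpace (Gsub G e) 1, ℝ)) :
    threePointCorresponds G e F K ↔ (homeomorphIndepOne hG e).kernelCongr K = F := by
  constructor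
  · rintro ⟨hee, hex, hxy⟩
    ext ⟨a, b⟩
    rcases eq_basePt_or_inVe G e a with rfl | ⟨x, rfl⟩ <;>
      rcases eq_basePt_or_inVe G e b with rfl | ⟨y, rfl⟩ <;>
      simp [hee, hex, hxy]
  · rintro rfl
    simp [threePointCorresponds]

lemma existsUnique_lasDualFeasible_threePointCorresponds (hG : IsPackingGraph G) (e : V)
    {F : C(↥(insert e (Vsub G e)) × ↥(insert e (Vsub G e)), ℝ)} (hF : threePointFeasible G e F) :
    ∃! K, lasDualFeasible (Gsub G e) 1 K ∧ threePointCorresponds G e F K := by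
  set E := (homeomorphIndepOne hG e).kernelCongr
  simp_rw [threePointCorresponds_iff hG e]
  refine ⟨E.symm F, ⟨?_, E.apply_symm_apply F⟩, fun K hK => E.eq_symm_apply.2 hK.2⟩
  rwa [← threePointFeasible_kernelCongr_iff hG e, E.apply_symm_apply]

lemma existsUnique_threePointFeasible_threePointCorresponds (hG : IsPackingGraph G) (e : V)
    {K : C(IndepSpace (Gsub G e) 1 × IndepSpace (Gsub G e) 1, ℝ)}
    (hK : lasDualFeasible (Gsub G e) 1 K) :
    ∃! F, threePointFeasible G e F ∧ threePointCorresponds G e F K := by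
  simp_rw [threePointCorresponds_iff hG e]
  exact ⟨_, ⟨(threePointFeasible_kernelCongr_iff hG e K).2 hK, rfl⟩, fun F hF => hF.2.symm⟩

lemma threePointValue_eq_lasDualValue (hG : IsPackingGraph G) (e : V) :
    threePointValue G e = lasDualValue (Gsub G e) 1 := by
  rw [threePointValue, lasDualValue]
  congr 1
  ext v
  constructor
  · rintro ⟨F, hF, rfl⟩
    obtain ⟨K, ⟨hK, hFK⟩, -⟩ := existsUnique_lasDualFeasible_threePointCorresponds hG e hF
    exact ⟨K, hK, hFK.1.symm⟩
  · rintro ⟨K, hK, rfl⟩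
    obtain ⟨F, ⟨hF, hFK⟩, -⟩ := existsUnique_threePointFeasible_threePointCorresponds hG e hK
    exact ⟨F, hF, hFK.1⟩

end ThreePointCorrespondence

theorem threePoint_bound_eq_lasDual_one_of_subgraph_general
    {V : Type u} [TopologicalSpace V] [T2Space V]
    (G : SimpleGraph V) (hG : IsPackingGraph G) (e : V) :
    ((1 : ℝ) + threePointValue G e = 1 + lasDualValue (Gsub G e) 1) ∧
    (∀ F : C(↥(insert e (Vsub G e)) × ↥(insert e (Vsub G e)), ℝ), threePointFeasible G e F →
      ∃! K : C(IndepSpace (Gsub G e) 1 × IndepSpace (Gsub G e) 1, ℝ),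
        lasDualFeasible (Gsub G e) 1 K ∧ threePointCorresponds G e F K) ∧
    (∀ K : C(IndepSpace (Gsub G e) 1 × IndepSpace (Gsub G e) 1, ℝ),
      lasDualFeasible (Gsub G e) 1 K →
      ∃! F : C(↥(insert e (Vsub G e)) × ↥(insert e (Vsub G e)), ℝ),
        threePointFeasible G e F ∧ threePointCorresponds G e F K) :=
  ⟨by rw [threePointValue_eq_lasDualValue hG e],
    fun _ => existsUnique_lasDualFeasible_threePointCorresponds hG e,
    fun _ => existsUnique_threePointFeasible_threePointCorresponds hG e⟩

/-- For a compact topological packing graph `G` and `e ∈ V`, the three-point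
bound `1 + inf{F(e,e) : …}` equals `1 + las_1(G^e)^*`; moreover the natural identification
between kernels is a bijection between the two feasible regions preserving objective
values. -/
theorem threePoint_bound_eq_lasDual_one_of_subgraph
    {V : Type u} [TopologicalSpace V] [CompactSpace V] [T2Space V]
    (G : SimpleGraph V) (hG : IsPackingGraph G) (e : V) :
    ((1 : ℝ) + threePointValue G e = 1 + lasDualValue (Gsub G e) 1) ∧
    (∀ F : C(↥(insert e (Vsub G e)) × ↥(insert e (Vsub G e)), ℝ), threePointFeasible G e F →
      ∃! K : C(IndepSpace (Gsub G e) 1 × IndepSpace (Gsub G e) 1, ℝ),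
        lasDualFeasible (Gsub G e) 1 K ∧ threePointCorresponds G e F K) ∧
    (∀ K : C(IndepSpace (Gsub G e) 1 × IndepSpace (Gsub G e) 1, ℝ),
      lasDualFeasible (Gsub G e) 1 K →
      ∃! F : C(↥(insert e (Vsub G e)) × ↥(insert e (Vsub G e)), ℝ),
        threePointFeasible G e F ∧ threePointCorresponds G e F K) :=
  threePoint_bound_eq_lasDual_one_of_subgraph_general G hG e

end
end
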